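/- arXiv:2210.14560 — 7 statements merged into one kernel-verified Lean document; each statement's English description precedes it below -/
import Mathlib

section
/- Let 0 < γ < 1, ηβ > 0, and let A, B be the two roots of γx² − (1+ηβ)(1+γ)x + (1+ηβ) = 0 with A > B. Define U = (A−1)/(A−B), V = (1−B)/(A−B), and a_t = (δ/β)(U·A^t + V·B^t) for t = 0, 1, 2, … (with δ > 0, β > 0). Then for all t ≥ 1: (1+ηβ)·a_{t−1} + ηβγ·Σ_{i=0}^{t−1} a_i = γ·a_t. -/
/-!
The sequence `a t` is a combination of `Aᵗ` and `Bᵗ`, so it satisfies the second-order recurrence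
`γ a(t+2) = (1+ηβ)(1+γ) a(t+1) − (1+ηβ) a t` whose characteristic polynomial is the given quadratic.
The difference of the two sides of the identity at `t+1` and at `t` is exactly this recurrence, so the
identity propagates from `t = 1`, where it reduces to Vieta's formula `γ(A+B) = (1+ηβ)(1+γ)`
(with `U + V = 1` and `UA + VB = A + B − 1`).
-/

open Finset

section QuadraticRoots

variable {R : Type*} [CommRing R]

theorem mul_add_eq_neg_of_quadratic_roots [IsDomain R] {a b c x y : R}
    (hx : a * x ^ 2 + b * x + c = 0) (hy : a * y ^ 2 + b * y + c = 0) (hxy : x ≠ y) :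
    a * (x + y) = -b := by
  refine mul_right_cancel₀ (sub_ne_zero.2 hxy) ?_
  linear_combination hx - hy

theorem linear_comb_pow_quadratic_roots_recurrence {a b c x y : R}
    (hx : a * x ^ 2 + b * x + c = 0) (hy : a * y ^ 2 + b * y + c = 0) (u v : R) (t : ℕ) :
    a * (u * x ^ (t + 2) + v * y ^ (t + 2)) + b * (u * x ^ (t + 1) + v * y ^ (t + 1))
      + c * (u * x ^ t + v * y ^ t) = 0 := by
  linear_combination (u * x ^ t) * hx + (v * y ^ t) * hy

theorem add_mul_sum_range_eq_of_recurrence {γ p : R} {f : ℕ → R}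
    (hrec : ∀ t, γ * f (t + 2) - (1 + p) * (1 + γ) * f (t + 1) + (1 + p) * f t = 0)
    (h₀ : (1 + p) * f 0 + p * γ * f 0 = γ * f 1) (t : ℕ) :
    (1 + p) * f t + p * γ * ∑ i ∈ range (t + 1), f i = γ * f (t + 1) := by
  induction t with
  | zero => simpa using h₀
  | succ t ih =>
    rw [sum_range_succ]
    linear_combination ih - hrec t

end QuadraticRoots

theorem stmt_2_general (γ η β δ : ℝ) (A B : ℝ)
    (hArt : γ * A ^ 2 - (1 + η * β) * (1 + γ) * A + (1 + η * β) = 0)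
    (hBrt : γ * B ^ 2 - (1 + η * β) * (1 + γ) * B + (1 + η * β) = 0)
    (hAB : A > B)
    (U V : ℝ) (hU : U = (A - 1) / (A - B)) (hV : V = (1 - B) / (A - B))
    (a : ℕ → ℝ) (ha : ∀ t, a t = (δ / β) * (U * A ^ t + V * B ^ t)) :
    ∀ t : ℕ, 1 ≤ t →
      (1 + η * β) * a (t - 1) + η * β * γ * (∑ i ∈ Finset.range t, a i) = γ * a t := by
  have hA : γ * A ^ 2 + -((1 + η * β) * (1 + γ)) * A + (1 + η * β) = 0 := by
    linear_combination hArt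
  have hB : γ * B ^ 2 + -((1 + η * β) * (1 + γ)) * B + (1 + η * β) = 0 := by
    linear_combination hBrt
  have hvieta := mul_add_eq_neg_of_quadratic_roots hA hB hAB.ne'
  have hrec (t : ℕ) :
      γ * a (t + 2) - (1 + η * β) * (1 + γ) * a (t + 1) + (1 + η * β) * a t = 0 := by
    simp only [ha]
    linear_combination linear_comb_pow_quadratic_roots_recurrence hA hB
      (δ / β * U) (δ / β * V) t
  have h₀ : (1 + η * β) * a 0 + η * β * γ * a 0 = γ * a 1 := by
    have hAB' : A - B ≠ 0 := sub_ne_zero.2 hAB.ne'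
    rw [ha, ha, hU, hV]
    field_simp
    linear_combination (-(δ / β) * (A - B)) * hvieta
  rintro t ht
  obtain ⟨t, rfl⟩ := Nat.exists_eq_add_of_le' ht
  simpa using add_mul_sum_range_eq_of_recurrence hrec h₀ t

/-- With `A > B` the roots of `γx² − (1+ηβ)(1+γ)x + (1+ηβ) = 0`,
`U = (A−1)/(A−B)`, `V = (1−B)/(A−B)`, and `a t = (δ/β)(U·Aᵗ + V·Bᵗ)`,
for all `t ≥ 1`: `(1+ηβ)·a(t−1) + ηβγ·∑_{i=0}^{t−1} a i = γ·a t`. -/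
theorem stmt_2 (γ η β δ : ℝ) (hγ0 : 0 < γ) (hγ1 : γ < 1) (hη : 0 < η) (hβ : 0 < β)
    (hδ : 0 < δ) (A B : ℝ)
    (hArt : γ * A ^ 2 - (1 + η * β) * (1 + γ) * A + (1 + η * β) = 0)
    (hBrt : γ * B ^ 2 - (1 + η * β) * (1 + γ) * B + (1 + η * β) = 0)
    (hAB : A > B)
    (U V : ℝ) (hU : U = (A - 1) / (A - B)) (hV : V = (1 - B) / (A - B))
    (a : ℕ → ℝ) (ha : ∀ t, a t = (δ / β) * (U * A ^ t + V * B ^ t)) :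
    ∀ t : ℕ, 1 ≤ t →
      (1 + η * β) * a (t - 1) + η * β * γ * (∑ i ∈ Finset.range t, a i) = γ * a t :=
  stmt_2_general γ η β δ A B hArt hBrt hAB U V hU hV a ha
end

section
/- Let 0 < γ < 1, ηβ > 0, with A, B the roots as above (A > B). Then γA > 1, 0 < γB < 1, 1/(γ+1) < B < 1, U > 0, V > 0, U + V = 1, I > 0, and J > 0, where I = (γA + A − 1)/((A−B)(γA−1)) and J = (γB + B − 1)/((A−B)(1−γB)). -/
/-!
With `c = 1 + ηβ > 1`, the quadratic `p x = γ x² - c (1 + γ) x + c` factors as `γ (x - A) (x - B)`,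
so `p x < 0` exactly strictly between the roots, and `p x > 0` at a point below `A` puts that point
below `B`. Now `p 1 = γ (1 - c) < 0` and `p (1/γ) = (1 - c)/γ < 0` give `B < 1 < A` and
`γ B < 1 < γ A`, while `p (1/(γ+1)) = γ/(γ+1)² > 0` gives `1/(γ+1) < B`. Every remaining claim is
a quotient of quantities whose signs are then known.
-/

section Quadratic

variable {R : Type*}

theorem quadratic_eq_mul_sub_mul_sub [CommRing R] [IsDomain R] {a b c r s : R} (hrs : r ≠ s)
    (hr : a * r ^ 2 + b * r + c = 0) (hs : a * s ^ 2 + b * s + c = 0) (x : R) :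
    a * x ^ 2 + b * x + c = a * (x - r) * (x - s) := by
  have hb : b = -a * (r + s) := by
    have : (a * (r + s) + b) * (r - s) = 0 := by linear_combination hr - hs
    linear_combination (mul_eq_zero.1 this).resolve_right (sub_ne_zero.2 hrs)
  have hc : c = a * r * s := by linear_combination hr - r * hb
  linear_combination x * hb + hc

variable [CommRing R] [LinearOrder R] [IsStrictOrderedRing R] {a b c r s x : R}

theorem mem_Ioo_roots_of_quadratic_neg (ha : 0 < a) (hsr : s < r)
    (hr : a * r ^ 2 + b * r + c = 0) (hs : a * s ^ 2 + b * s + c = 0)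
    (hx : a * x ^ 2 + b * x + c < 0) : s < x ∧ x < r := by
  rw [quadratic_eq_mul_sub_mul_sub hsr.ne' hr hs, mul_assoc] at hx
  rcases mul_neg_iff.1 (neg_of_mul_neg_right hx ha.le) with ⟨hxr, hxs⟩ | ⟨hxr, hxs⟩
  · exact absurd (hsr.trans (sub_pos.1 hxr)) (sub_neg.1 hxs).not_gt
  · exact ⟨sub_pos.1 hxs, sub_neg.1 hxr⟩

theorem lt_of_quadratic_pos_of_lt_root (ha : 0 < a) (hsr : s < r)
    (hr : a * r ^ 2 + b * r + c = 0) (hs : a * s ^ 2 + b * s + c = 0)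
    (hx : 0 < a * x ^ 2 + b * x + c) (hxr : x < r) : x < s := by
  rw [quadratic_eq_mul_sub_mul_sub hsr.ne' hr hs, mul_assoc] at hx
  exact sub_neg.1 (neg_of_mul_pos_right (pos_of_mul_pos_right hx ha.le) (sub_neg.2 hxr).le)

end Quadratic

theorem stmt_5_general (γ η β : ℝ) (hγ0 : 0 < γ) (hη : 0 < η) (hβ : 0 < β)
    (A B : ℝ)
    (hArt : γ * A ^ 2 - (1 + η * β) * (1 + γ) * A + (1 + η * β) = 0)
    (hBrt : γ * B ^ 2 - (1 + η * β) * (1 + γ) * B + (1 + η * β) = 0)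
    (hAB : A > B)
    (U V I J : ℝ)
    (hU : U = (A - 1) / (A - B)) (hV : V = (1 - B) / (A - B))
    (hI : I = (γ * A + A - 1) / ((A - B) * (γ * A - 1)))
    (hJ : J = (γ * B + B - 1) / ((A - B) * (1 - γ * B))) :
    γ * A > 1 ∧ 0 < γ * B ∧ γ * B < 1 ∧ 1 / (γ + 1) < B ∧ B < 1 ∧
      U > 0 ∧ V > 0 ∧ U + V = 1 ∧ I > 0 ∧ J > 0 := by
  set c := 1 + η * β
  have hc : 1 < c := lt_add_of_pos_right 1 (mul_pos hη hβ)
  have hA : γ * A ^ 2 + -(c * (1 + γ)) * A + c = 0 := by linear_combination hArt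
  have hB : γ * B ^ 2 + -(c * (1 + γ)) * B + c = 0 := by linear_combination hBrt
  have hp1 : γ * 1 ^ 2 + -(c * (1 + γ)) * 1 + c < 0 := by nlinarith [mul_pos hγ0 (sub_pos.2 hc)]
  have hp_inv : γ * (1 / γ) ^ 2 + -(c * (1 + γ)) * (1 / γ) + c < 0 := by
    have : γ * (1 / γ) ^ 2 + -(c * (1 + γ)) * (1 / γ) + c = (1 - c) / γ := by field_simp; ring
    exact this ▸ div_neg_of_neg_of_pos (by linarith) hγ0
  have hp_inv_succ : 0 < γ * (1 / (γ + 1)) ^ 2 + -(c * (1 + γ)) * (1 / (γ + 1)) + c := by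
    have : γ * (1 / (γ + 1)) ^ 2 + -(c * (1 + γ)) * (1 / (γ + 1)) + c = γ / (γ + 1) ^ 2 := by
      field_simp; ring
    exact this ▸ by positivity
  obtain ⟨hB1, hA1⟩ := mem_Ioo_roots_of_quadratic_neg hγ0 hAB hA hB hp1
  obtain ⟨hγB, hγA⟩ := mem_Ioo_roots_of_quadratic_neg hγ0 hAB hA hB hp_inv
  rw [lt_div_iff₀' hγ0] at hγB
  rw [div_lt_iff₀' hγ0] at hγA
  have hBγ : 1 / (γ + 1) < B := lt_of_quadratic_pos_of_lt_root hγ0 hAB hA hB hp_inv_succ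
    ((div_lt_one (by linarith)).2 (by linarith) |>.trans hA1)
  have hJnum : 0 < γ * B + B - 1 := by rw [div_lt_iff₀ (by linarith)] at hBγ; linarith
  have hAB' : 0 < A - B := sub_pos.2 hAB
  have hB0 : 0 < B := (by positivity : (0 : ℝ) < 1 / (γ + 1)).trans hBγ
  refine ⟨hγA, by positivity, hγB, hBγ, hB1, ?_, ?_, ?_, ?_, ?_⟩
  · exact hU ▸ div_pos (by linarith) hAB'
  · exact hV ▸ div_pos (by linarith) hAB'
  · rw [hU, hV, ← add_div, div_eq_one_iff_eq hAB'.ne']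
    ring
  · exact hI ▸ div_pos (by linarith) (mul_pos hAB' (by linarith))
  · exact hJ ▸ div_pos hJnum (mul_pos hAB' (by linarith))

/-- Sign/range facts: `γA > 1`, `0 < γB < 1`, `1/(γ+1) < B < 1`,
`U > 0`, `V > 0`, `U + V = 1`, `I > 0`, `J > 0`. -/
theorem stmt_5 (γ η β : ℝ) (hγ0 : 0 < γ) (hγ1 : γ < 1) (hη : 0 < η) (hβ : 0 < β)
    (A B : ℝ)
    (hArt : γ * A ^ 2 - (1 + η * β) * (1 + γ) * A + (1 + η * β) = 0)
    (hBrt : γ * B ^ 2 - (1 + η * β) * (1 + γ) * B + (1 + η * β) = 0)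
    (hAB : A > B)
    (U V I J : ℝ)
    (hU : U = (A - 1) / (A - B)) (hV : V = (1 - B) / (A - B))
    (hI : I = (γ * A + A - 1) / ((A - B) * (γ * A - 1)))
    (hJ : J = (γ * B + B - 1) / ((A - B) * (1 - γ * B))) :
    γ * A > 1 ∧ 0 < γ * B ∧ γ * B < 1 ∧ 1 / (γ + 1) < B ∧ B < 1 ∧
      U > 0 ∧ V > 0 ∧ U + V = 1 ∧ I > 0 ∧ J > 0 :=
  stmt_5_general γ η β hγ0 hη hβ A B hArt hBrt hAB U V I J hU hV hI hJ
end

section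
/- With h as defined above (h(x) = ηδ[I(γA)^x + J(γB)^x − 1/(ηβ) − (γ²(γ^x−1) − (γ−1)x)/(γ−1)²]), for every integer x ≥ 1: h(x) − h(x−1) ≥ 0. Hence h is nondecreasing on the nonnegative integers and h(x) ≥ 0 for all x ≥ 0. -/
/-!
The increments of `h` are `h (n + 1) - h n = η δ · incr n`, where `incr n` combines the powers of
the roots `γA`, `γB` of `t² - (1 + ηβ)(1 + γ) t + γ(1 + ηβ)` with a geometric sum. Hence `incr`
satisfies the second-order recurrence with these coefficients up to a nonnegative forcing term.
Because `(1 + ηβ)(1 + γ) ≥ γ(1 + ηβ) + 1`, such a recurrence preserves "nonnegative and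
nondecreasing", and `incr 0 = 0 ≤ incr 1` starts the induction. Finally `h 0 = 0` since
`I + J = 1 / (ηβ)`.
-/

open Finset

theorem mul_add_eq_neg_and_mul_mul_eq_of_quadratic_roots {R : Type*} [CommRing R] [IsDomain R]
    {a b c x y : R} (hx : a * x ^ 2 + b * x + c = 0) (hy : a * y ^ 2 + b * y + c = 0)
    (hxy : x ≠ y) : a * (x + y) = -b ∧ a * (x * y) = c := by
  have hxy' : x - y ≠ 0 := sub_ne_zero.mpr hxy
  constructor
  · have : (x - y) * (a * (x + y) + b) = 0 := by linear_combination hx - hy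
    linear_combination (mul_eq_zero.mp this).resolve_left hxy'
  · have : (x - y) * (a * (x * y) - c) = 0 := by linear_combination y * hx - x * hy
    linear_combination (mul_eq_zero.mp this).resolve_left hxy'

theorem monotone_of_le_second_order_recurrence {R : Type*} [CommRing R] [LinearOrder R]
    [IsStrictOrderedRing R] {d : ℕ → R} {p q : R} (hq : 0 ≤ q) (hpq : q + 1 ≤ p)
    (h0 : 0 ≤ d 0) (h01 : d 0 ≤ d 1) (hrec : ∀ n, p * d (n + 1) - q * d n ≤ d (n + 2)) :
    Monotone d := by
  have step : ∀ n, 0 ≤ d n ∧ d n ≤ d (n + 1) := by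
    intro n
    induction n with
    | zero => exact ⟨h0, h01⟩
    | succ n ih =>
      obtain ⟨hn, hle⟩ := ih
      have hn1 : 0 ≤ d (n + 1) := hn.trans hle
      refine ⟨hn1, ?_⟩
      calc d (n + 1) ≤ d (n + 1) + q * (d (n + 1) - d n) :=
            le_add_of_nonneg_right (mul_nonneg hq (sub_nonneg.mpr hle))
        _ = (q + 1) * d (n + 1) - q * d n := by ring
        _ ≤ p * d (n + 1) - q * d n := by gcongr
        _ ≤ d (n + 2) := hrec n
  exact monotone_nat_of_le_succ fun n => (step n).2

theorem mul_pow_add_two_of_sq_eq {R : Type*} [CommRing R] {r p q : R}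
    (hr : r ^ 2 = p * r - q) (c : R) (n : ℕ) :
    c * r ^ (n + 2) = p * (c * r ^ (n + 1)) - q * (c * r ^ n) := by
  linear_combination c * r ^ n * hr

theorem geom_sum_range_add_two {R : Type*} [CommRing R] (x : R) (n : ℕ) :
    ∑ i ∈ range (n + 2), x ^ i
      = (1 + x) * ∑ i ∈ range (n + 1), x ^ i - x * ∑ i ∈ range n, x ^ i := by
  simp only [sum_range_succ]
  ring

theorem geom_sum_range_add_two_eq_sub {K : Type*} [Field K] {γ : K} (hγ : γ ≠ 1) (n : ℕ) :
    ∑ i ∈ range (n + 2), γ ^ i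
      = (γ ^ 2 * (γ ^ (n + 1) - 1) - (γ - 1) * ((n + 1 : ℕ) : K)) / (γ - 1) ^ 2
        - (γ ^ 2 * (γ ^ n - 1) - (γ - 1) * (n : K)) / (γ - 1) ^ 2 := by
  have hγ' : γ - 1 ≠ 0 := sub_ne_zero.mpr hγ
  rw [geom_sum_eq hγ]
  field_simp
  push_cast
  ring

section Increment

variable {K : Type*} [Field K] {γ e A B I J : K}

def incr (γ A B I J : K) (n : ℕ) : K :=
  I * (γ * A - 1) * (γ * A) ^ n + J * (γ * B - 1) * (γ * B) ^ n - ∑ i ∈ range (n + 2), γ ^ i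

theorem sub_eq_mul_incr {c k : K} (hγ : γ ≠ 1) {h : ℕ → K}
    (hh : ∀ x : ℕ, h x = c * (I * (γ * A) ^ x + J * (γ * B) ^ x - k
      - (γ ^ 2 * (γ ^ x - 1) - (γ - 1) * (x : K)) / (γ - 1) ^ 2)) (n : ℕ) :
    h (n + 1) - h n = c * incr γ A B I J n := by
  rw [hh, hh, incr, geom_sum_range_add_two_eq_sub hγ]
  ring

theorem incr_add_two
    (hA : γ * A ^ 2 - (1 + e) * (1 + γ) * A + (1 + e) = 0)
    (hB : γ * B ^ 2 - (1 + e) * (1 + γ) * B + (1 + e) = 0) (n : ℕ) :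
    incr γ A B I J (n + 2) = (1 + e) * (1 + γ) * incr γ A B I J (n + 1)
      - γ * (1 + e) * incr γ A B I J n + e * ∑ i ∈ range (n + 4), γ ^ i := by
  have hrA : (γ * A) ^ 2 = (1 + e) * (1 + γ) * (γ * A) - γ * (1 + e) := by
    linear_combination γ * hA
  have hrB : (γ * B) ^ 2 = (1 + e) * (1 + γ) * (γ * B) - γ * (1 + e) := by
    linear_combination γ * hB
  have hS := geom_sum_range_add_two γ (n + 2)
  simp only [incr]
  linear_combination mul_pow_add_two_of_sq_eq hrA (I * (γ * A - 1)) n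
    + mul_pow_add_two_of_sq_eq hrB (J * (γ * B - 1)) n - (1 + e) * hS

theorem incr_zero (hAB : A ≠ B) (hA1 : γ * A - 1 ≠ 0) (hB1 : 1 - γ * B ≠ 0)
    (hI : I = (γ * A + A - 1) / ((A - B) * (γ * A - 1)))
    (hJ : J = (γ * B + B - 1) / ((A - B) * (1 - γ * B))) :
    incr γ A B I J 0 = 0 := by
  have hAB' : A - B ≠ 0 := sub_ne_zero.mpr hAB
  simp only [incr, hI, hJ, sum_range_succ, range_zero, sum_empty]
  field_simp
  ring

theorem incr_one (hAB : A ≠ B) (hA1 : γ * A - 1 ≠ 0) (hB1 : 1 - γ * B ≠ 0)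
    (hsum : γ * (A + B) = (1 + e) * (1 + γ))
    (hI : I = (γ * A + A - 1) / ((A - B) * (γ * A - 1)))
    (hJ : J = (γ * B + B - 1) / ((A - B) * (1 - γ * B))) :
    incr γ A B I J 1 = e * (1 + γ) ^ 2 := by
  have hAB' : A - B ≠ 0 := sub_ne_zero.mpr hAB
  simp only [incr, hI, hJ, sum_range_succ, range_zero, sum_empty]
  field_simp
  linear_combination (A - B) * (1 - γ * B) * (1 + γ) * hsum

theorem add_eq_one_div_of_roots (hAB : A ≠ B) (he : e ≠ 0)
    (hroots : (γ * A - 1) * (γ * B - 1) = -e)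
    (hI : I = (γ * A + A - 1) / ((A - B) * (γ * A - 1)))
    (hJ : J = (γ * B + B - 1) / ((A - B) * (1 - γ * B))) :
    I + J = 1 / e := by
  have hAB' : A - B ≠ 0 := sub_ne_zero.mpr hAB
  have hprod_ne : (γ * A - 1) * (1 - γ * B) ≠ 0 := by
    rw [show (γ * A - 1) * (1 - γ * B) = e by linear_combination -hroots]; exact he
  have hA1 := left_ne_zero_of_mul hprod_ne
  have hB1 := right_ne_zero_of_mul hprod_ne
  rw [hI, hJ]
  field_simp
  linear_combination (A - B) * hroots

end Increment

/-- `h x − h (x−1) ≥ 0` for integers `x ≥ 1`; hence `h` is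
nondecreasing on the nonnegative integers and `h x ≥ 0` for all `x ≥ 0`. -/
theorem stmt_9 (γ η β δ : ℝ) (hγ0 : 0 < γ) (hγ1 : γ < 1) (hη : 0 < η) (hβ : 0 < β)
    (hδ : 0 < δ) (A B : ℝ)
    (hArt : γ * A ^ 2 - (1 + η * β) * (1 + γ) * A + (1 + η * β) = 0)
    (hBrt : γ * B ^ 2 - (1 + η * β) * (1 + γ) * B + (1 + η * β) = 0)
    (hAB : A > B)
    (I J : ℝ)
    (hI : I = (γ * A + A - 1) / ((A - B) * (γ * A - 1)))
    (hJ : J = (γ * B + B - 1) / ((A - B) * (1 - γ * B)))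
    (h : ℕ → ℝ)
    (hh : ∀ x : ℕ, h x = η * δ * (I * (γ * A) ^ x + J * (γ * B) ^ x - 1 / (η * β)
      - (γ ^ 2 * (γ ^ x - 1) - (γ - 1) * (x : ℝ)) / (γ - 1) ^ 2)) :
    (∀ x : ℕ, 1 ≤ x → h x - h (x - 1) ≥ 0) ∧ Monotone h ∧ ∀ x : ℕ, h x ≥ 0 := by
  have he : 0 < η * β := mul_pos hη hβ
  obtain ⟨hsum, hprod⟩ := mul_add_eq_neg_and_mul_mul_eq_of_quadratic_roots
    (a := γ) (b := -((1 + η * β) * (1 + γ))) (c := 1 + η * β)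
    (by linear_combination hArt) (by linear_combination hBrt) hAB.ne'
  have hroots : (γ * A - 1) * (γ * B - 1) = -(η * β) := by
    linear_combination γ * hprod - hsum
  obtain ⟨hA1, hB1⟩ : γ * A - 1 ≠ 0 ∧ 1 - γ * B ≠ 0 := mul_ne_zero_iff.mp <| by
    rw [show (γ * A - 1) * (1 - γ * B) = η * β by linear_combination -hroots]; exact he.ne'
  have hrec : ∀ n, (1 + η * β) * (1 + γ) * incr γ A B I J (n + 1)
      - γ * (1 + η * β) * incr γ A B I J n ≤ incr γ A B I J (n + 2) := fun n => by
    rw [incr_add_two hArt hBrt n]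
    exact le_add_of_nonneg_right (mul_nonneg he.le (sum_nonneg fun i _ => pow_nonneg hγ0.le i))
  have hD0 := incr_zero hAB.ne' hA1 hB1 hI hJ
  have hD1 := incr_one (e := η * β) hAB.ne' hA1 hB1 (by linear_combination hsum) hI hJ
  have hDmono := monotone_of_le_second_order_recurrence (by positivity) (by linear_combination he.le) hD0.ge
    (by rw [hD0, hD1]; positivity) hrec
  have hmono : Monotone h := monotone_nat_of_le_succ fun n => by
    rw [← sub_nonneg, sub_eq_mul_incr hγ1.ne hh n]
    exact mul_nonneg (by positivity) (hD0 ▸ hDmono n.zero_le)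
  have h0 : h 0 = 0 := by
    have hIJ := add_eq_one_div_of_roots hAB.ne' he.ne' hroots hI hJ
    simp only [hh, pow_zero, Nat.cast_zero]
    linear_combination η * δ * hIJ
  refine ⟨fun x _ => sub_nonneg.mpr (hmono (Nat.sub_le x 1)), hmono,
    fun x => h0 ▸ hmono x.zero_le⟩
end

section
/- Define u(x) = U(γA)^x + V(γB)^x − 1 for integers x ≥ 0, with U, V, A, B, γ as above. Then u(x) ≥ (1 + ηβ + ηβγ)^x − 1, and in particular u(x) > 0 for all x ≥ 1. -/
/-!
Vieta's formulas give `γ(A + B) = (1 + ηβ)(1 + γ)` and `γAB = 1 + ηβ`, hence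
`(A - 1)(1 - B) = ηβ > 0`, so `0 < B < 1 < A` and `U, V` are convex weights. Their
combination `U(γA) + V(γB)` equals `γ(A + B - 1) = 1 + ηβ + ηβγ`, and convexity of
`t ↦ tˣ` on `[0, ∞)` gives `U(γA)ˣ + V(γB)ˣ ≥ (1 + ηβ + ηβγ)ˣ`.
-/

theorem vieta_quadratic {R : Type*} [CommRing R] [IsDomain R] {a s p x y : R}
    (hx : a * x ^ 2 - s * x + p = 0) (hy : a * y ^ 2 - s * y + p = 0) (hxy : x ≠ y) :
    a * (x + y) = s ∧ a * (x * y) = p := by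
  have hsum : a * (x + y) = s := by
    have h : (x - y) * (a * (x + y) - s) = 0 := by linear_combination hx - hy
    simpa [sub_ne_zero.mpr hxy, sub_eq_zero] using h
  exact ⟨hsum, by linear_combination x * hsum - hx⟩

theorem one_lt_and_lt_one_of_sub_one_mul_one_sub_pos {A B : ℝ} (hAB : B < A)
    (h : 0 < (A - 1) * (1 - B)) : 1 < A ∧ B < 1 := by
  rcases pos_and_pos_or_neg_and_neg_of_mul_pos h with ⟨hA, hB⟩ | ⟨hA, hB⟩
  · exact ⟨by linarith, by linarith⟩
  · linarith

theorem weighted_mean_eq_add_sub_one {A B : ℝ} (hAB : A ≠ B) :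
    (A - 1) / (A - B) * A + (1 - B) / (A - B) * B = A + B - 1 := by
  field_simp [sub_ne_zero.mpr hAB]
  ring

theorem sub_one_mul_one_sub_eq {γ k A B : ℝ} (hγ : γ ≠ 0)
    (hsum : γ * (A + B) = (1 + k) * (1 + γ)) (hprod : γ * (A * B) = 1 + k) :
    (A - 1) * (1 - B) = k :=
  mul_left_cancel₀ hγ (by linear_combination hsum - hprod)

theorem stmt_10_general (γ η β : ℝ) (hγ0 : 0 < γ) (hη : 0 < η) (hβ : 0 < β)
    (A B : ℝ)
    (hArt : γ * A ^ 2 - (1 + η * β) * (1 + γ) * A + (1 + η * β) = 0)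
    (hBrt : γ * B ^ 2 - (1 + η * β) * (1 + γ) * B + (1 + η * β) = 0)
    (hAB : A > B)
    (U V : ℝ) (hU : U = (A - 1) / (A - B)) (hV : V = (1 - B) / (A - B))
    (u : ℕ → ℝ) (hu : ∀ x : ℕ, u x = U * (γ * A) ^ x + V * (γ * B) ^ x - 1) :
    (∀ x : ℕ, u x ≥ (1 + η * β + η * β * γ) ^ x - 1) ∧ ∀ x : ℕ, 1 ≤ x → u x > 0 := by
  have hk : 0 < η * β := mul_pos hη hβ
  obtain ⟨hsum, hprod⟩ := vieta_quadratic hArt hBrt hAB.ne'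
  obtain ⟨hA1, hB1⟩ := one_lt_and_lt_one_of_sub_one_mul_one_sub_pos hAB
    (sub_one_mul_one_sub_eq hγ0.ne' hsum hprod ▸ hk)
  have hγA : 0 < γ * A := mul_pos hγ0 (by linarith)
  have hγB : 0 < γ * B :=
    mul_pos hγ0 (pos_of_mul_pos_right (by rw [mul_assoc, hprod]; linarith) hγA.le)
  have hUV : U + V = 1 := by rw [hU, hV, ← add_div, div_eq_one_iff_eq (by linarith)]; ring
  have hmean : U * (γ * A) + V * (γ * B) = 1 + η * β + η * β * γ := by
    have h := weighted_mean_eq_add_sub_one hAB.ne'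
    rw [← hU, ← hV] at h
    linear_combination γ * h + hsum
  have hjensen (x : ℕ) : (1 + η * β + η * β * γ) ^ x ≤ U * (γ * A) ^ x + V * (γ * B) ^ x := by
    simpa only [← hmean, smul_eq_mul] using (convexOn_pow x).2 (Set.mem_Ici.2 hγA.le)
      (Set.mem_Ici.2 hγB.le) (by rw [hU]; positivity) (by rw [hV]; positivity) hUV
  refine ⟨fun x => by linarith [hu x, hjensen x], fun x hx => ?_⟩
  have hc : 1 < 1 + η * β + η * β * γ := by linarith [mul_pos hk hγ0]
  linarith [hu x, hjensen x, one_lt_pow₀ hc (n := x) (by omega)]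

/-- With `u x = U(γA)ˣ + V(γB)ˣ − 1`, for all natural `x`:
`u x ≥ (1 + ηβ + ηβγ)ˣ − 1`, and `u x > 0` for all `x ≥ 1`. -/
theorem stmt_10 (γ η β : ℝ) (hγ0 : 0 < γ) (hγ1 : γ < 1) (hη : 0 < η) (hβ : 0 < β)
    (A B : ℝ)
    (hArt : γ * A ^ 2 - (1 + η * β) * (1 + γ) * A + (1 + η * β) = 0)
    (hBrt : γ * B ^ 2 - (1 + η * β) * (1 + γ) * B + (1 + η * β) = 0)
    (hAB : A > B)
    (U V : ℝ) (hU : U = (A - 1) / (A - B)) (hV : V = (1 - B) / (A - B))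
    (u : ℕ → ℝ) (hu : ∀ x : ℕ, u x = U * (γ * A) ^ x + V * (γ * B) ^ x - 1) :
    (∀ x : ℕ, u x ≥ (1 + η * β + η * β * γ) ^ x - 1) ∧ ∀ x : ℕ, 1 ≤ x → u x > 0 :=
  stmt_10_general γ η β hγ0 hη hβ A B hArt hBrt hAB U V hU hV u hu
end

section
/- Suppose a sequence of nonnegative reals G(t), t = 0, 1, …, satisfies G(0) = 0 and the recursion G(t) ≤ (ηβ+1)G(t−1) + ηβγ·Σ_{b=1}^{t} γ^{b−1} G(t−b) + ηδ·Σ_{b=0}^{t} γ^b for t ≥ 1, where 0 < γ < 1 and η, β, δ > 0. Then G(t) ≤ f(t) for all t ≥ 0, where f(x) = (δ/β)(γ^x(U A^x + V B^x) − 1) with A, B, U, V as defined from the roots of γx² − (1+ηβ)(1+γ)x + (1+ηβ) = 0. -/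
/-!
With `a_t = (δ/β)(U Aᵗ + V Bᵗ)`, the bound is `f t = γᵗ a_t - δ/β`. Because `A` and `B` are the
roots of `γx² - (1+ηβ)(1+γ)x + (1+ηβ)`, the sequence `a` satisfies a second-order linear
recurrence, and summing it gives `(1+ηβ) a_{t-1} + ηβγ ∑_{i<t} a_i = γ a_t`. This is exactly what
makes `f` satisfy the recursion for `G` with equality. The recursion has nonnegative coefficients
in the earlier terms, so strong induction on `t` compares `G` with `f`.
-/

open Finset

/-- The paper's `U Aⁿ + V Bⁿ`, so that `a_n = (δ / β) * rootSeq A B n`. -/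
noncomputable def rootSeq (A B : ℝ) (n : ℕ) : ℝ :=
  (A - 1) / (A - B) * A ^ n + (1 - B) / (A - B) * B ^ n

noncomputable def rootSeqBound (γ C A B : ℝ) (t : ℕ) : ℝ :=
  C * (γ ^ t * rootSeq A B t - 1)

section RootSeq

variable {γ k A B : ℝ}

theorem rootSeq_zero (hAB : A ≠ B) : rootSeq A B 0 = 1 := by
  have : A - B ≠ 0 := sub_ne_zero.mpr hAB
  simp only [rootSeq, pow_zero, mul_one]
  field_simp
  ring

variable (hA : γ * A ^ 2 - (1 + k) * (1 + γ) * A + (1 + k) = 0)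
  (hB : γ * B ^ 2 - (1 + k) * (1 + γ) * B + (1 + k) = 0)
include hA hB

theorem rootSeq_one (hAB : A ≠ B) : γ * rootSeq A B 1 = 1 + k + k * γ := by
  have : A - B ≠ 0 := sub_ne_zero.mpr hAB
  simp only [rootSeq, pow_one]
  field_simp
  linear_combination hA - hB

theorem rootSeq_add_two (n : ℕ) :
    γ * rootSeq A B (n + 2) =
      (1 + k) * (1 + γ) * rootSeq A B (n + 1) - (1 + k) * rootSeq A B n := by
  simp only [rootSeq]
  linear_combination ((A - 1) / (A - B) * A ^ n) * hA + ((1 - B) / (A - B) * B ^ n) * hB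

theorem rootSeq_add_sum_range (hAB : A ≠ B) (n : ℕ) :
    (1 + k) * rootSeq A B n + k * γ * ∑ i ∈ range (n + 1), rootSeq A B i =
      γ * rootSeq A B (n + 1) := by
  induction n with
  | zero =>
    rw [sum_range_one, rootSeq_zero hAB, rootSeq_one hA hB hAB]
    ring
  | succ m ih =>
    rw [sum_range_succ]
    linear_combination ih - rootSeq_add_two hA hB m

end RootSeq

theorem sum_Icc_one_eq_sum_range (φ : ℕ → ℕ → ℝ) (n : ℕ) :
    ∑ b ∈ Icc 1 (n + 1), φ (b - 1) (n + 1 - b) = ∑ j ∈ range (n + 1), φ j (n - j) := by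
  rw [← Ico_add_one_right_eq_Icc, sum_Ico_eq_sum_range]
  refine sum_congr (by simp) fun j hj => ?_
  congr 1 <;> omega

theorem sum_range_pow_mul_pow_sub_mul (γ : ℝ) (a : ℕ → ℝ) (n : ℕ) :
    ∑ j ∈ range (n + 1), γ ^ j * (γ ^ (n - j) * a (n - j)) =
      γ ^ n * ∑ i ∈ range (n + 1), a i := by
  rw [← sum_range_reflect a, mul_sum]
  refine sum_congr rfl fun j hj => ?_
  have hj : j ≤ n := Nat.lt_succ_iff.mp (mem_range.mp hj)
  rw [Nat.add_sub_cancel, ← mul_assoc, ← pow_add, Nat.add_sub_cancel' hj]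

theorem le_of_le_recursion {c d : ℝ} {w q G F : ℕ → ℝ}
    (hc : 0 ≤ c) (hd : 0 ≤ d) (hw : ∀ j, 0 ≤ w j) (h0 : G 0 ≤ F 0)
    (hG : ∀ n, G (n + 1) ≤ c * G n + d * ∑ j ∈ range (n + 1), w j * G (n - j) + q n)
    (hF : ∀ n, F (n + 1) = c * F n + d * ∑ j ∈ range (n + 1), w j * F (n - j) + q n) :
    ∀ t, G t ≤ F t := by
  intro t
  induction t using Nat.strong_induction_on with
  | _ t ih =>
    match t with
    | 0 => exact h0
    | n + 1 =>
      have hsum : ∑ j ∈ range (n + 1), w j * G (n - j) ≤ ∑ j ∈ range (n + 1), w j * F (n - j) :=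
        sum_le_sum fun j _ => mul_le_mul_of_nonneg_left (ih (n - j) (by omega)) (hw j)
      calc G (n + 1) ≤ c * G n + d * ∑ j ∈ range (n + 1), w j * G (n - j) + q n := hG n
        _ ≤ c * F n + d * ∑ j ∈ range (n + 1), w j * F (n - j) + q n := by
          gcongr
          exact ih n (by omega)
        _ = F (n + 1) := (hF n).symm

theorem rootSeqBound_succ {γ k A B : ℝ}
    (hA : γ * A ^ 2 - (1 + k) * (1 + γ) * A + (1 + k) = 0)
    (hB : γ * B ^ 2 - (1 + k) * (1 + γ) * B + (1 + k) = 0) (hAB : A ≠ B) (C : ℝ) (n : ℕ) :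
    rootSeqBound γ C A B (n + 1) = (k + 1) * rootSeqBound γ C A B n
      + k * γ * ∑ j ∈ range (n + 1), γ ^ j * rootSeqBound γ C A B (n - j)
      + k * C * ∑ b ∈ range (n + 2), γ ^ b := by
  have hconv : ∑ j ∈ range (n + 1), γ ^ j * rootSeqBound γ C A B (n - j) =
      C * (γ ^ n * ∑ i ∈ range (n + 1), rootSeq A B i - ∑ j ∈ range (n + 1), γ ^ j) := by
    rw [← sum_range_pow_mul_pow_sub_mul, mul_sub, mul_sum, mul_sum, ← sum_sub_distrib]
    exact sum_congr rfl fun j _ => by rw [rootSeqBound]; ring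
  rw [hconv, geom_sum_succ (n := n + 1)]
  simp only [rootSeqBound]
  linear_combination (-(C * γ ^ n)) * rootSeq_add_sum_range hA hB hAB n

theorem stmt_11_general (γ η β δ : ℝ) (hγ0 : 0 < γ) (hη : 0 < η) (hβ : 0 < β)
    (A B : ℝ)
    (hArt : γ * A ^ 2 - (1 + η * β) * (1 + γ) * A + (1 + η * β) = 0)
    (hBrt : γ * B ^ 2 - (1 + η * β) * (1 + γ) * B + (1 + η * β) = 0)
    (hAB : A > B)
    (U V : ℝ) (hU : U = (A - 1) / (A - B)) (hV : V = (1 - B) / (A - B))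
    (f : ℕ → ℝ)
    (hf : ∀ x : ℕ, f x = (δ / β) * (γ ^ x * (U * A ^ x + V * B ^ x) - 1))
    (G : ℕ → ℝ) (hG0 : G 0 = 0)
    (hGrec : ∀ t : ℕ, 1 ≤ t →
      G t ≤ (η * β + 1) * G (t - 1)
        + η * β * γ * (∑ b ∈ Finset.Icc 1 t, γ ^ (b - 1) * G (t - b))
        + η * δ * (∑ b ∈ Finset.range (t + 1), γ ^ b)) :
    ∀ t : ℕ, G t ≤ f t := by
  have hf' : f = rootSeqBound γ (δ / β) A B := by
    funext t
    rw [hf, hU, hV, rootSeqBound, rootSeq]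
  have hηδ : η * δ = η * β * (δ / β) := by field_simp
  subst hf'
  refine le_of_le_recursion (by positivity) (by positivity) (fun j => by positivity)
    (by simp [hG0, rootSeqBound, rootSeq_zero hAB.ne']) (fun n => ?_)
    (fun n => hηδ ▸ rootSeqBound_succ hArt hBrt hAB.ne' (δ / β) n)
  simpa only [Nat.add_sub_cancel, sum_Icc_one_eq_sum_range (fun j m => γ ^ j * G m)]
    using hGrec (n + 1) n.succ_pos

/-- Any nonnegative sequence `G` with `G 0 = 0` satisfying the
recursion `G t ≤ (ηβ+1)G(t−1) + ηβγ·∑_{b=1}^{t} γ^{b−1} G(t−b) + ηδ·∑_{b=0}^{t} γᵇ`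
is bounded by `f x = (δ/β)(γˣ(UAˣ + VBˣ) − 1)`. -/
theorem stmt_11 (γ η β δ : ℝ) (hγ0 : 0 < γ) (hγ1 : γ < 1) (hη : 0 < η) (hβ : 0 < β)
    (hδ : 0 < δ) (A B : ℝ)
    (hArt : γ * A ^ 2 - (1 + η * β) * (1 + γ) * A + (1 + η * β) = 0)
    (hBrt : γ * B ^ 2 - (1 + η * β) * (1 + γ) * B + (1 + η * β) = 0)
    (hAB : A > B)
    (U V : ℝ) (hU : U = (A - 1) / (A - B)) (hV : V = (1 - B) / (A - B))
    (f : ℕ → ℝ)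
    (hf : ∀ x : ℕ, f x = (δ / β) * (γ ^ x * (U * A ^ x + V * B ^ x) - 1))
    (G : ℕ → ℝ) (hGnn : ∀ t, 0 ≤ G t) (hG0 : G 0 = 0)
    (hGrec : ∀ t : ℕ, 1 ≤ t →
      G t ≤ (η * β + 1) * G (t - 1)
        + η * β * γ * (∑ b ∈ Finset.Icc 1 t, γ ^ (b - 1) * G (t - b))
        + η * δ * (∑ b ∈ Finset.range (t + 1), γ ^ b)) :
    ∀ t : ℕ, G t ≤ f t :=
  stmt_11_general γ η β δ hγ0 hη hβ A B hArt hBrt hAB U V hU hV f hf G hG0 hGrec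
end

section
/- Suppose F: ℝ^d → ℝ is β-smooth (its gradient is β-Lipschitz), and consider the update x⁺ = x + γv⁺ − η∇F(x) where v⁺ = γv − η∇F(x), with η, β > 0, 0 < γ < 1, and suppose ‖γv‖ ≤ μη‖∇F(x)‖ for some μ ≥ 0. Then F(x⁺) − F(x) ≤ [ −η(γ+1)(1 − βη(γ+1)/2) + βη²γ²μ²/2 + ηγμ(1 − βη(γ+1)) ]·‖∇F(x)‖², provided 0 < βη(γ+1) ≤ 1. -/
/-!
The step is `x⁺ - x = γ • (γ • v) - η (γ + 1) • ∇F x`. Plugging it into the descent lemma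
`F y ≤ F x + ⟪∇F x, y - x⟫ + β/2 ‖y - x‖²` and expanding leaves a quadratic form in `∇F x` and
`γ • v`; its cross term `⟪∇F x, γ • v⟫` carries the coefficient `γ (1 - β η (γ + 1)) ≥ 0`, so
Cauchy–Schwarz together with `‖γ • v‖ ≤ μ η ‖∇F x‖` bounds everything by a multiple of `‖∇F x‖²`.
-/

open InnerProductSpace Set

section

variable {E : Type*} [NormedAddCommGroup E] [InnerProductSpace ℝ E]

theorem HasGradientAt.hasDerivAt_comp_add_smul [CompleteSpace E] {F : E → ℝ} {g x d : E} {t : ℝ}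
    (hF : HasGradientAt F g (x + t • d)) :
    HasDerivAt (fun s : ℝ => F (x + s • d)) ⟪g, d⟫_ℝ t := by
  have hline : HasDerivAt (fun s : ℝ => x + s • d) d t := by
    simpa using ((hasDerivAt_id t).smul_const d).const_add x
  have := hF.hasFDerivAt.comp_hasDerivAt t hline
  rwa [toDual_apply_apply] at this

theorem le_add_inner_add_sq_of_gradient_lipschitz [CompleteSpace E] {F : E → ℝ} {grad : E → E}
    (hgrad : ∀ x, HasGradientAt F (grad x) x) {β : ℝ}
    (hsmooth : ∀ x y, ‖grad x - grad y‖ ≤ β * ‖x - y‖) (x y : E) :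
    F y ≤ F x + ⟪grad x, y - x⟫_ℝ + β / 2 * ‖y - x‖ ^ 2 := by
  set d := y - x
  set φ : ℝ → ℝ := fun t => F (x + t • d) - t * ⟪grad x, d⟫_ℝ - β * t ^ 2 / 2 * ‖d‖ ^ 2
  have hφ : ∀ t, HasDerivAt φ (⟪grad (x + t • d) - grad x, d⟫_ℝ - β * t * ‖d‖ ^ 2) t := by
    intro t
    have := (((hgrad (x + t • d)).hasDerivAt_comp_add_smul).sub
      ((hasDerivAt_id t).mul_const ⟪grad x, d⟫_ℝ)).sub
      ((((hasDerivAt_pow 2 t).const_mul β).div_const 2).mul_const (‖d‖ ^ 2))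
    exact this.congr_deriv (by simp only [inner_sub_left]; push_cast; ring)
  have hφ_anti : AntitoneOn φ (Icc 0 1) := by
    refine antitoneOn_of_deriv_nonpos (convex_Icc 0 1)
      (fun t _ => (hφ t).continuousAt.continuousWithinAt)
      (fun t _ => (hφ t).differentiableAt.differentiableWithinAt) fun t ht => ?_
    rw [interior_Icc] at ht
    have ht0 : 0 ≤ t := ht.1.le
    rw [(hφ t).deriv, sub_nonpos]
    calc ⟪grad (x + t • d) - grad x, d⟫_ℝ ≤ ‖grad (x + t • d) - grad x‖ * ‖d‖ :=
          real_inner_le_norm _ _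
      _ ≤ β * ‖t • d‖ * ‖d‖ := by
          gcongr
          simpa using hsmooth (x + t • d) x
      _ = β * t * ‖d‖ ^ 2 := by rw [norm_smul, Real.norm_of_nonneg ht0]; ring
  have hφ01 := hφ_anti (left_mem_Icc.2 zero_le_one) (right_mem_Icc.2 zero_le_one) zero_le_one
  simp only [φ, d, one_smul, zero_smul, add_zero, add_sub_cancel] at hφ01
  linarith

theorem momentum_step_sub (x v g : E) (γ η : ℝ) :
    x + γ • (γ • v - η • g) - η • g - x = γ • (γ • v) - (η * (γ + 1)) • g := by
  rw [smul_sub, smul_smul, smul_smul, mul_add, mul_one, add_smul, mul_comm γ η]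
  abel

theorem inner_add_half_mul_norm_sq_sub_smul (g w : E) (β p a : ℝ) :
    ⟪g, p • w - a • g⟫_ℝ + β / 2 * ‖p • w - a • g‖ ^ 2 =
      -a * (1 - β * a / 2) * ‖g‖ ^ 2 + β * p ^ 2 / 2 * ‖w‖ ^ 2
        + p * (1 - β * a) * ⟪g, w⟫_ℝ := by
  rw [inner_sub_right, real_inner_smul_right, real_inner_smul_right, real_inner_self_eq_norm_sq,
    norm_sub_sq_real, real_inner_smul_left, real_inner_smul_right, norm_smul, norm_smul,
    Real.norm_eq_abs, Real.norm_eq_abs, mul_pow, mul_pow, sq_abs, sq_abs, real_inner_comm w g]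
  ring

theorem inner_add_half_mul_norm_sq_sub_smul_le {g w : E} {β p a c : ℝ} (hβ : 0 ≤ β)
    (hp : 0 ≤ p) (hβa : β * a ≤ 1) (hw : ‖w‖ ≤ c * ‖g‖) :
    ⟪g, p • w - a • g⟫_ℝ + β / 2 * ‖p • w - a • g‖ ^ 2 ≤
      (-a * (1 - β * a / 2) + β * p ^ 2 * c ^ 2 / 2 + p * c * (1 - β * a)) * ‖g‖ ^ 2 := by
  rw [inner_add_half_mul_norm_sq_sub_smul]
  have hinner : ⟪g, w⟫_ℝ ≤ c * ‖g‖ ^ 2 :=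
    calc ⟪g, w⟫_ℝ ≤ ‖g‖ * ‖w‖ := real_inner_le_norm g w
      _ ≤ ‖g‖ * (c * ‖g‖) := by gcongr
      _ = c * ‖g‖ ^ 2 := by ring
  have hnorm : ‖w‖ ^ 2 ≤ c ^ 2 * ‖g‖ ^ 2 := by
    rw [← mul_pow]; gcongr
  have hquad : β * p ^ 2 / 2 * ‖w‖ ^ 2 ≤ β * p ^ 2 / 2 * (c ^ 2 * ‖g‖ ^ 2) := by gcongr
  have hcross : p * (1 - β * a) * ⟪g, w⟫_ℝ ≤ p * (1 - β * a) * (c * ‖g‖ ^ 2) := by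
    gcongr
  linarith

end

theorem stmt_16_general {E : Type*} [NormedAddCommGroup E] [InnerProductSpace ℝ E] [CompleteSpace E]
    (F : E → ℝ) (grad : E → E) (hgrad : ∀ x, HasGradientAt F (grad x) x)
    (β η γ μ : ℝ) (hβ : 0 < β) (hγ0 : 0 < γ)
    (hsmooth : ∀ x y : E, ‖grad x - grad y‖ ≤ β * ‖x - y‖)
    (hstep1 : β * η * (γ + 1) ≤ 1)
    (x v : E) (hv : ‖γ • v‖ ≤ μ * η * ‖grad x‖)
    (vplus xplus : E)
    (hvp : vplus = γ • v - η • grad x)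
    (hxp : xplus = x + γ • vplus - η • grad x) :
    F xplus - F x ≤
      (-(η * (γ + 1)) * (1 - β * η * (γ + 1) / 2) + β * η ^ 2 * γ ^ 2 * μ ^ 2 / 2
        + η * γ * μ * (1 - β * η * (γ + 1))) * ‖grad x‖ ^ 2 := by
  have hdescent := le_add_inner_add_sq_of_gradient_lipschitz hgrad hsmooth x xplus
  have hbound := inner_add_half_mul_norm_sq_sub_smul_le (a := η * (γ + 1)) hβ.le hγ0.le
    (by linarith) hv
  subst hxp hvp
  rw [momentum_step_sub] at hdescent
  linear_combination hdescent + hbound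

/-- Descent of one momentum step for a `β`-smooth function. -/
theorem stmt_16 {E : Type*} [NormedAddCommGroup E] [InnerProductSpace ℝ E] [CompleteSpace E]
    (F : E → ℝ) (grad : E → E) (hgrad : ∀ x, HasGradientAt F (grad x) x)
    (β η γ μ : ℝ) (hβ : 0 < β) (hη : 0 < η) (hγ0 : 0 < γ) (hγ1 : γ < 1)
    (hμ : 0 ≤ μ)
    (hsmooth : ∀ x y : E, ‖grad x - grad y‖ ≤ β * ‖x - y‖)
    (hstep0 : 0 < β * η * (γ + 1)) (hstep1 : β * η * (γ + 1) ≤ 1)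
    (x v : E) (hv : ‖γ • v‖ ≤ μ * η * ‖grad x‖)
    (vplus xplus : E)
    (hvp : vplus = γ • v - η • grad x)
    (hxp : xplus = x + γ • vplus - η • grad x) :
    F xplus - F x ≤
      (-(η * (γ + 1)) * (1 - β * η * (γ + 1) / 2) + β * η ^ 2 * γ ^ 2 * μ ^ 2 / 2
        + η * γ * μ * (1 - β * η * (γ + 1))) * ‖grad x‖ ^ 2 :=
  stmt_16_general F grad hgrad β η γ μ hβ hγ0 hsmooth hstep1 x v hv vplus xplus hvp hxp
end

section
/- Let δ > 0, β > 0, 0 < γ < 1, and for each η > 0 define A(η), B(η) as the roots of γx² − (1+ηβ)(1+γ)x + (1+ηβ) = 0 with A(η) > B(η), and I(η) = (γA(η)+A(η)−1)/((A(η)−B(η))(γA(η)−1)). Then lim_{η→0⁺} η·δ·(I(η) − 1/(ηβ)) = 0. -/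
open Filter Set Topology

/-!
`γ A(η) − 1` vanishes at `η = 0` with derivative `β / (1 − γ)`, so `η / (γ A(η) − 1)` tends to
`(1 − γ) / β`. The remaining factors of `η I(η)` are continuous at `0`, where `A = 1/γ` and `B = 1`,
so `η I(η) → (1/γ) / ((1 − γ)/γ) · (1 − γ)/β = 1/β`, and `η δ (I(η) − 1/(ηβ)) = δ (η I(η) − 1/β)`.
-/

lemma tendsto_sub_div_of_hasDerivAt {f : ℝ → ℝ} {f' a : ℝ} (hf : HasDerivAt f f' a)
    (ha : f a = 0) (hf' : f' ≠ 0) :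
    Tendsto (fun x => (x - a) / f x) (𝓝[≠] a) (𝓝 f'⁻¹) := by
  refine (hf.tendsto_slope.inv₀ hf').congr fun x => ?_
  rw [slope_def_field, ha, sub_zero, inv_div]

/-- The discriminant of `γx² − (1+ηβ)(1+γ)x + (1+ηβ)`. -/
def discr (γ β η : ℝ) : ℝ := ((1 + η * β) * (1 + γ)) ^ 2 - 4 * γ * (1 + η * β)

noncomputable def largerRoot (γ β η : ℝ) : ℝ := ((1 + η * β) * (1 + γ) + √(discr γ β η)) / (2 * γ)

noncomputable def smallerRoot (γ β η : ℝ) : ℝ := ((1 + η * β) * (1 + γ) - √(discr γ β η)) / (2 * γ)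

section Roots

variable {γ : ℝ} (β : ℝ)

lemma discr_zero : discr γ β 0 = (1 - γ) ^ 2 := by
  unfold discr; ring

lemma sqrt_discr_zero (hγ1 : γ < 1) : √(discr γ β 0) = 1 - γ := by
  rw [discr_zero, Real.sqrt_sq (by linarith)]

lemma continuous_sqrt_discr : Continuous fun η => √(discr γ β η) := by
  unfold discr; fun_prop

lemma hasDerivAt_one_add_mul (x : ℝ) : HasDerivAt (fun η : ℝ => 1 + η * β) β x := by
  simpa using ((hasDerivAt_id x).mul_const β).const_add 1

lemma hasDerivAt_sqrt_discr (hγ1 : γ < 1) :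
    HasDerivAt (fun η => √(discr γ β η)) (β * (1 + γ ^ 2) / (1 - γ)) 0 := by
  have hlin := hasDerivAt_one_add_mul β 0
  have hdiscr : HasDerivAt (discr γ β) (2 * β * (1 + γ ^ 2)) 0 := by
    refine (((hlin.mul_const (1 + γ)).fun_pow 2).fun_sub (hlin.const_mul (4 * γ))).congr_deriv ?_
    norm_num
    ring
  convert hdiscr.sqrt (by rw [discr_zero]; nlinarith) using 1
  rw [sqrt_discr_zero β hγ1]
  field_simp

lemma largerRoot_zero (hγ0 : γ ≠ 0) (hγ1 : γ < 1) : largerRoot γ β 0 = 1 / γ := by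
  rw [largerRoot, sqrt_discr_zero β hγ1]
  field_simp
  ring

lemma smallerRoot_zero (hγ0 : γ ≠ 0) (hγ1 : γ < 1) : smallerRoot γ β 0 = 1 := by
  rw [smallerRoot, sqrt_discr_zero β hγ1]
  field_simp
  ring

lemma continuous_largerRoot : Continuous (largerRoot γ β) := by
  have := continuous_sqrt_discr (γ := γ) β
  unfold largerRoot
  fun_prop

lemma continuous_smallerRoot : Continuous (smallerRoot γ β) := by
  have := continuous_sqrt_discr (γ := γ) β
  unfold smallerRoot
  fun_prop

lemma hasDerivAt_mul_largerRoot_sub_one (hγ0 : γ ≠ 0) (hγ1 : γ < 1) :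
    HasDerivAt (fun η => γ * largerRoot γ β η - 1) (β / (1 - γ)) 0 := by
  refine (((((hasDerivAt_one_add_mul β 0).mul_const (1 + γ)).add
    (hasDerivAt_sqrt_discr β hγ1)).div_const (2 * γ)).const_mul γ |>.sub_const 1).congr_deriv ?_
  have : 1 - γ ≠ 0 := by linarith
  field_simp
  ring

lemma tendsto_div_mul_largerRoot_sub_one (hγ0 : γ ≠ 0) (hγ1 : γ < 1) (hβ : β ≠ 0) :
    Tendsto (fun η => η / (γ * largerRoot γ β η - 1)) (𝓝[≠] 0) (𝓝 ((1 - γ) / β)) := by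
  have hγ1' : 1 - γ ≠ 0 := by linarith
  simpa using tendsto_sub_div_of_hasDerivAt (hasDerivAt_mul_largerRoot_sub_one β hγ0 hγ1)
    (by simp [largerRoot_zero β hγ0 hγ1, hγ0]) (div_ne_zero hβ hγ1')

lemma tendsto_largerRoot_ratio (hγ0 : γ ≠ 0) (hγ1 : γ < 1) :
    Tendsto (fun η => (γ * largerRoot γ β η + largerRoot γ β η - 1) /
      (largerRoot γ β η - smallerRoot γ β η)) (𝓝 0) (𝓝 (1 / (1 - γ))) := by
  have hγ1' : 1 - γ ≠ 0 := by linarith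
  have hL := (continuous_largerRoot (γ := γ) β).tendsto 0
  have hS := (continuous_smallerRoot (γ := γ) β).tendsto 0
  rw [largerRoot_zero β hγ0 hγ1] at hL
  rw [smallerRoot_zero β hγ0 hγ1] at hS
  have := (((hL.const_mul γ).add hL).sub_const 1).div (hL.sub hS)
    (by rw [div_sub_one hγ0]; exact div_ne_zero hγ1' hγ0)
  rwa [show (γ * (1 / γ) + 1 / γ - 1) / (1 / γ - 1) = 1 / (1 - γ) by field_simp; ring] at this

end Roots

theorem stmt_19_general (γ β δ : ℝ) (hγ0 : 0 < γ) (hγ1 : γ < 1) (hβ : 0 < β)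
    (A B I : ℝ → ℝ)
    (hA : ∀ η : ℝ, A η = ((1 + η * β) * (1 + γ)
      + Real.sqrt (((1 + η * β) * (1 + γ)) ^ 2 - 4 * γ * (1 + η * β))) / (2 * γ))
    (hB : ∀ η : ℝ, B η = ((1 + η * β) * (1 + γ)
      - Real.sqrt (((1 + η * β) * (1 + γ)) ^ 2 - 4 * γ * (1 + η * β))) / (2 * γ))
    (hI : ∀ η : ℝ, I η = (γ * A η + A η - 1) / ((A η - B η) * (γ * A η - 1))) :
    Filter.Tendsto (fun η : ℝ => η * δ * (I η - 1 / (η * β)))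
      (nhdsWithin 0 (Set.Ioi 0)) (nhds 0) := by
  obtain rfl : A = largerRoot γ β := funext hA
  obtain rfl : B = smallerRoot γ β := funext hB
  have hratio := (tendsto_largerRoot_ratio β hγ0.ne' hγ1).mono_left (nhdsWithin_le_nhds (s := Ioi 0))
  have hslope := (tendsto_div_mul_largerRoot_sub_one β hγ0.ne' hγ1 hβ.ne').mono_left
    (nhdsGT_le_nhdsNE 0)
  have hlim := ((hratio.mul hslope).sub_const (1 / β)).const_mul δ
  rw [show δ * (1 / (1 - γ) * ((1 - γ) / β) - 1 / β) = 0 by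
    field_simp [show 1 - γ ≠ 0 by linarith]; ring] at hlim
  refine hlim.congr' ?_
  filter_upwards [self_mem_nhdsWithin] with η (hη : 0 < η)
  have hcancel : η * δ * (1 / (η * β)) = δ * (1 / β) := by field_simp
  rw [hI, mul_sub (η * δ), hcancel, div_mul_div_comm]
  ring

/-- As `η → 0⁺`, `η·δ·(I(η) − 1/(ηβ)) → 0`, where `A(η) > B(η)`
are the roots of `γx² − (1+ηβ)(1+γ)x + (1+ηβ) = 0` and
`I(η) = (γA(η)+A(η)−1)/((A(η)−B(η))(γA(η)−1))`. -/
theorem stmt_19 (γ β δ : ℝ) (hγ0 : 0 < γ) (hγ1 : γ < 1) (hβ : 0 < β) (hδ : 0 < δ)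
    (A B I : ℝ → ℝ)
    (hA : ∀ η : ℝ, A η = ((1 + η * β) * (1 + γ)
      + Real.sqrt (((1 + η * β) * (1 + γ)) ^ 2 - 4 * γ * (1 + η * β))) / (2 * γ))
    (hB : ∀ η : ℝ, B η = ((1 + η * β) * (1 + γ)
      - Real.sqrt (((1 + η * β) * (1 + γ)) ^ 2 - 4 * γ * (1 + η * β))) / (2 * γ))
    (hI : ∀ η : ℝ, I η = (γ * A η + A η - 1) / ((A η - B η) * (γ * A η - 1))) :
    Filter.Tendsto (fun η : ℝ => η * δ * (I η - 1 / (η * β)))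
      (nhdsWithin 0 (Set.Ioi 0)) (nhds 0) :=
  stmt_19_general γ β δ hγ0 hγ1 hβ A B I hA hB hI
end
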